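/- arXiv:2004.11234 — 2 statements merged into one kernel-verified Lean document; each statement's English description precedes it below -/
import Mathlib

section
/- Consider the linear state map F(x, z) := Ax + Cz on ℝ^N with C ∈ ℝ^N, A ∈ M_N(ℝ) and σ_max(A) < 1, and let Z : Ω → D^ℤ (D ⊂ ℝ compact) be a zero-mean strictly stationary square-integrable input process with absolutely summable autocovariance function γ whose spectral density f satisfies f(λ) ≥ 0 on [−π, π] with f(λ) = 0 in at most countably many points. Suppose additionally that Z is a white noise (γ(h) = 0 for all h ≠ 0) and that the state covariance matrix Γ_X := Cov(X_t, X_t) of the state process X := U^{A,C}(Z) is non-singular. Then the total memory capacity and the total forecasting capacity of the linear system with respect to Z satisfy MC = N and FC = 0. -/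
open Matrix MeasureTheory

/-- Expectation of a real random variable. -/
noncomputable def expv {Ω : Type*} [MeasurableSpace Ω] (μ : Measure Ω) (f : Ω → ℝ) : ℝ :=
  ∫ ω, f ω ∂μ

/-- Covariance of two real random variables. -/
noncomputable def covv {Ω : Type*} [MeasurableSpace Ω] (μ : Measure Ω) (f g : Ω → ℝ) : ℝ :=
  ∫ ω, (f ω - expv μ f) * (g ω - expv μ g) ∂μ

/-- The τ-lag memory capacity (τ = -k ∈ ℤ₋) of a system with two-sided-time
state process X and input Z (computed at present time t = 0, which is
justified by stationarity):
MC_τ = 1 - (1/Var(Z_t)) min_{W,a} E[(Z_{t+τ} - Wᵀ X_t - a)²]. -/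
noncomputable def memCapZ {Ω : Type*} [MeasurableSpace Ω] (μ : Measure Ω) {N : ℕ}
    (Z : ℤ → Ω → ℝ) (X : ℤ → Ω → (Fin N → ℝ)) (k : ℕ) : ℝ :=
  1 - (1 / covv μ (Z 0) (Z 0)) *
    ⨅ p : (Fin N → ℝ) × ℝ, ∫ ω, (Z (-(k : ℤ)) ω - p.1 ⬝ᵥ X 0 ω - p.2) ^ 2 ∂μ

/-- The τ-lag forecasting capacity (τ = -k ∈ ℤ⁻, k ≥ 1), computed at t = 0:
FC_τ = 1 - (1/Var(Z_t)) min_{W,a} E[(Z_t - Wᵀ X_{t+τ} - a)²]. -/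
noncomputable def foreCapZ {Ω : Type*} [MeasurableSpace Ω] (μ : Measure Ω) {N : ℕ}
    (Z : ℤ → Ω → ℝ) (X : ℤ → Ω → (Fin N → ℝ)) (k : ℕ) : ℝ :=
  1 - (1 / covv μ (Z 0) (Z 0)) *
    ⨅ p : (Fin N → ℝ) × ℝ, ∫ ω, (Z 0 ω - p.1 ⬝ᵥ X (-(k : ℤ)) ω - p.2) ^ 2 ∂μ

/-- The spectral density f(λ) = (1/2π) ∑_{n ∈ ℤ} e^{-inλ} γ(n) (γ(-n) = γ(n)). -/
noncomputable def specDens (γ : ℕ → ℝ) (x : ℝ) : ℂ :=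
  (1 / (2 * Real.pi) : ℂ) * ∑' n : ℤ, Complex.exp (-Complex.I * n * x) * (γ n.natAbs : ℂ)

/-! With a white-noise input of variance `σ`, the state `X_t = ∑ₘ Z_{t-m} uₘ` (`uₘ = Aᵐ C`)
satisfies `E[Z_{t-k} X_t] = σ u_k`, `E[Z_s X_t] = 0` for `s > t`, and `Γ_X = σ ∑ₘ uₘ uₘᵀ`.
The best affine predictor of a centred `Y` from a centred vector `X` leaves the error
`E[Y²] - vᵀ Γ_X⁻¹ v` with `v = E[Y X]`. Hence `MC_{-k} = σ u_kᵀ Γ_X⁻¹ u_k`, which sums to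
`tr (Γ_X⁻¹ Γ_X) = N`, while every forecasting capacity vanishes because future inputs are
uncorrelated with the present state. The input is bounded, so dominated convergence computes all
these moments term by term from the series defining `X_t`. -/

section Regression

variable {n : Type*} [Fintype n]

lemma iInf_quadratic_eq_of_mulVec_eq {Γ : Matrix n n ℝ} (hsymm : Γ.IsSymm)
    (hpsd : ∀ W, 0 ≤ (Γ *ᵥ W) ⬝ᵥ W) {v w : n → ℝ} (hw : Γ *ᵥ w = v) (c : ℝ) :
    ⨅ p : (n → ℝ) × ℝ, (c - 2 * (p.1 ⬝ᵥ v) + (Γ *ᵥ p.1) ⬝ᵥ p.1 + p.2 ^ 2)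
      = c - w ⬝ᵥ v := by
  have hcomm : ∀ a b, (Γ *ᵥ a) ⬝ᵥ b = (Γ *ᵥ b) ⬝ᵥ a := fun a b => by
    rw [dotProduct_comm, dotProduct_mulVec, ← vecMul_transpose, hsymm.eq]
  have hsq : ∀ p : (n → ℝ) × ℝ, c - 2 * (p.1 ⬝ᵥ v) + (Γ *ᵥ p.1) ⬝ᵥ p.1 + p.2 ^ 2
      = (c - w ⬝ᵥ v) + ((Γ *ᵥ (p.1 - w)) ⬝ᵥ (p.1 - w) + p.2 ^ 2) := fun p => by
    have h1 : (Γ *ᵥ p.1) ⬝ᵥ w = p.1 ⬝ᵥ v := by rw [hcomm, hw, dotProduct_comm]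
    simp only [mulVec_sub, sub_dotProduct, dotProduct_sub, h1, hw]
    rw [dotProduct_comm v p.1, dotProduct_comm v w]
    ring
  have hle : ∀ p : (n → ℝ) × ℝ,
      c - w ⬝ᵥ v ≤ c - 2 * (p.1 ⬝ᵥ v) + (Γ *ᵥ p.1) ⬝ᵥ p.1 + p.2 ^ 2 := fun p => by
    rw [hsq]
    nlinarith [hpsd (p.1 - w), sq_nonneg p.2]
  refine le_antisymm (ciInf_le_of_le ⟨_, Set.forall_mem_range.2 hle⟩ (w, 0) ?_)
    (le_ciInf hle)
  rw [hsq]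
  simp

variable {Ω : Type*} [MeasurableSpace Ω] {μ : Measure Ω}

lemma integral_mul_dotProduct {g : Ω → ℝ} {X : Ω → n → ℝ}
    (hint : ∀ i, Integrable (fun ω => g ω * X ω i) μ) (W : n → ℝ) :
    ∫ ω, g ω * (W ⬝ᵥ X ω) ∂μ = W ⬝ᵥ fun i => ∫ ω, g ω * X ω i ∂μ := by
  simp only [dotProduct, Finset.mul_sum, mul_left_comm (g _)]
  rw [integral_finsetSum _ fun i _ => (hint i).const_mul (W i)]
  simp only [integral_const_mul]

lemma memLp_dotProduct {p : ENNReal} {X : Ω → n → ℝ} (hX : ∀ i, MemLp (fun ω => X ω i) p μ)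
    (W : n → ℝ) : MemLp (fun ω => W ⬝ᵥ X ω) p μ := by
  simp only [dotProduct]
  exact memLp_finsetSum _ fun i _ => (hX i).const_mul (W i)

lemma integral_dotProduct_sq {X : Ω → n → ℝ} (hX : ∀ i, MemLp (fun ω => X ω i) 2 μ)
    {Γ : Matrix n n ℝ} (hΓ : ∀ i j, Γ i j = ∫ ω, X ω i * X ω j ∂μ) (W : n → ℝ) :
    ∫ ω, (W ⬝ᵥ X ω) ^ 2 ∂μ = (Γ *ᵥ W) ⬝ᵥ W := by
  have hrow : ∀ i, ∫ ω, (W ⬝ᵥ X ω) * X ω i ∂μ = (Γ *ᵥ W) i := fun i => by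
    simp_rw [mul_comm _ (X _ i)]
    rw [integral_mul_dotProduct fun j => (hX i).integrable_mul (hX j), mulVec, dotProduct_comm]
    simp only [hΓ]
  simp_rw [sq]
  rw [integral_mul_dotProduct fun i => (memLp_dotProduct hX W).integrable_mul (hX i),
    dotProduct_comm]
  simp only [hrow]

variable [IsProbabilityMeasure μ]

lemma integral_sub_sub_const_sq {Y U : Ω → ℝ} (hY : MemLp Y 2 μ) (hU : MemLp U 2 μ)
    (hY0 : ∫ ω, Y ω ∂μ = 0) (hU0 : ∫ ω, U ω ∂μ = 0) (a : ℝ) :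
    ∫ ω, (Y ω - U ω - a) ^ 2 ∂μ
      = ∫ ω, Y ω ^ 2 ∂μ - 2 * ∫ ω, Y ω * U ω ∂μ + ∫ ω, U ω ^ 2 ∂μ + a ^ 2 := by
  have iY := hY.integrable one_le_two
  have iU := hU.integrable one_le_two
  have iYU : Integrable (fun ω => 2 * (Y ω * U ω)) μ := (hY.integrable_mul hU).const_mul 2
  have iYYU : Integrable (fun ω => Y ω ^ 2 - 2 * (Y ω * U ω)) μ := hY.integrable_sq.sub iYU
  have iquad : Integrable (fun ω => Y ω ^ 2 - 2 * (Y ω * U ω) + U ω ^ 2) μ :=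
    iYYU.add hU.integrable_sq
  have ilin : Integrable (fun ω => 2 * a * U ω - 2 * a * Y ω) μ :=
    (iU.const_mul (2 * a)).sub (iY.const_mul (2 * a))
  have hpt : ∀ ω, (Y ω - U ω - a) ^ 2
      = (Y ω ^ 2 - 2 * (Y ω * U ω) + U ω ^ 2) + (2 * a * U ω - 2 * a * Y ω) + a ^ 2 :=
    fun ω => by ring
  simp_rw [hpt]
  have iquadlin : Integrable (fun ω => Y ω ^ 2 - 2 * (Y ω * U ω) + U ω ^ 2
      + (2 * a * U ω - 2 * a * Y ω)) μ := iquad.add ilin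
  rw [integral_add iquadlin (integrable_const _), integral_add iquad ilin,
    integral_add iYYU hU.integrable_sq,
    integral_sub hY.integrable_sq iYU, integral_sub (iU.const_mul _) (iY.const_mul _)]
  simp [integral_const_mul, hY0, hU0]

lemma iInf_integral_sq_sub_dotProduct_sub [DecidableEq n] {Y : Ω → ℝ} {X : Ω → n → ℝ}
    (hY : MemLp Y 2 μ) (hX : ∀ i, MemLp (fun ω => X ω i) 2 μ)
    (hY0 : ∫ ω, Y ω ∂μ = 0) (hX0 : ∀ i, ∫ ω, X ω i ∂μ = 0)
    {Γ : Matrix n n ℝ} (hΓ : ∀ i j, Γ i j = ∫ ω, X ω i * X ω j ∂μ) (hΓdet : IsUnit Γ.det)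
    {v : n → ℝ} (hv : ∀ i, v i = ∫ ω, Y ω * X ω i ∂μ) :
    ⨅ p : (n → ℝ) × ℝ, ∫ ω, (Y ω - p.1 ⬝ᵥ X ω - p.2) ^ 2 ∂μ
      = ∫ ω, Y ω ^ 2 ∂μ - (Γ⁻¹ *ᵥ v) ⬝ᵥ v := by
  have hv' : v = fun i => ∫ ω, Y ω * X ω i ∂μ := funext hv
  have hmean : ∀ W : n → ℝ, ∫ ω, W ⬝ᵥ X ω ∂μ = 0 := fun W => by
    have := integral_mul_dotProduct (μ := μ) (g := fun _ => 1)
      (fun i => by simpa using (hX i).integrable one_le_two) W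
    simpa [show (fun i => ∫ ω, X ω i ∂μ) = 0 from funext hX0] using this
  have hexp : ∀ p : (n → ℝ) × ℝ, ∫ ω, (Y ω - p.1 ⬝ᵥ X ω - p.2) ^ 2 ∂μ
      = ∫ ω, Y ω ^ 2 ∂μ - 2 * (p.1 ⬝ᵥ v) + (Γ *ᵥ p.1) ⬝ᵥ p.1 + p.2 ^ 2 := fun p => by
    rw [integral_sub_sub_const_sq hY (memLp_dotProduct hX p.1) hY0 (hmean p.1),
      integral_mul_dotProduct (fun i => hY.integrable_mul (hX i)), integral_dotProduct_sq hX hΓ,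
      hv']
  have hsymm : Γ.IsSymm := IsSymm.ext fun i j => by
    simp only [hΓ, mul_comm]
  have hpsd : ∀ W, 0 ≤ (Γ *ᵥ W) ⬝ᵥ W := fun W =>
    integral_dotProduct_sq hX hΓ W ▸ integral_nonneg fun _ => sq_nonneg _
  simp_rw [hexp]
  exact iInf_quadratic_eq_of_mulVec_eq hsymm hpsd
    (by rw [mulVec_mulVec, mul_nonsing_inv Γ hΓdet, one_mulVec]) _

end Regression

lemma hasSum_inv_mulVec_dotProduct {n : Type*} [Fintype n] [DecidableEq n]
    {G : Matrix n n ℝ} (hG : IsUnit G.det) {v w : ℕ → n → ℝ}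
    (hvw : ∀ i j, HasSum (fun m => v m i * w m j) (G i j)) :
    HasSum (fun m => (G⁻¹ *ᵥ v m) ⬝ᵥ w m) (Fintype.card n) := by
  have hterm : ∀ m, (G⁻¹ *ᵥ v m) ⬝ᵥ w m = ∑ i, ∑ j, G⁻¹ i j * (v m j * w m i) := fun m => by
    simp only [dotProduct, mulVec, Finset.sum_mul, mul_assoc]
  have htrace : ∑ i, ∑ j, G⁻¹ i j * G j i = Fintype.card n := by
    rw [← trace_one, ← nonsing_inv_mul G hG]
    simp only [trace, diag, mul_apply]
  simp_rw [hterm, ← htrace]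
  exact hasSum_sum fun i _ => hasSum_sum fun j _ => (hvw j i).mul_left _

section LinearProcess

variable {Ω : Type*} [MeasurableSpace Ω] {μ : Measure Ω}

lemma aestronglyMeasurable_of_hasSum {f : ℕ → Ω → ℝ} {x : Ω → ℝ}
    (hf : ∀ m, AEStronglyMeasurable (f m) μ) (hx : ∀ ω, HasSum (fun m => f m ω) (x ω)) :
    AEStronglyMeasurable x μ :=
  aestronglyMeasurable_of_tendsto_ae Filter.atTop
    (fun n => (Finset.range n).aestronglyMeasurable_fun_sum fun m _ => hf m)
    (ae_of_all _ fun ω => (hx ω).tendsto_sum_nat)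

lemma abs_le_mul_tsum_of_hasSum {a u : ℕ → ℝ} {s M : ℝ} (ha : ∀ m, |a m| ≤ M)
    (hu : Summable fun m => |u m|) (hs : HasSum (fun m => a m * u m) s) :
    |s| ≤ M * ∑' m, |u m| := by
  rw [← hs.tsum_eq, ← Real.norm_eq_abs]
  refine tsum_of_norm_bounded (hu.hasSum.mul_left M) fun m => ?_
  rw [Real.norm_eq_abs, abs_mul]
  exact mul_le_mul_of_nonneg_right (ha m) (abs_nonneg _)

lemma hasSum_integral_mul_of_hasSum [IsFiniteMeasure μ] {g : Ω → ℝ} {Mg : ℝ}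
    (hg : AEStronglyMeasurable g μ) (hgM : ∀ ω, |g ω| ≤ Mg)
    {f : ℕ → Ω → ℝ} {b : ℕ → ℝ} (hf : ∀ m, AEStronglyMeasurable (f m) μ)
    (hfb : ∀ m ω, |f m ω| ≤ b m) (hb : Summable b)
    {x : Ω → ℝ} (hx : ∀ ω, HasSum (fun m => f m ω) (x ω)) :
    HasSum (fun m => ∫ ω, g ω * f m ω ∂μ) (∫ ω, g ω * x ω ∂μ) := by
  refine hasSum_integral_of_dominated_convergence (fun m _ => Mg * b m)
    (fun m => hg.mul (hf m)) (fun m => ae_of_all _ fun ω => ?_)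
    (ae_of_all _ fun _ => hb.mul_left Mg) (integrable_const _)
    (ae_of_all _ fun ω => (hx ω).mul_left (g ω))
  rw [Real.norm_eq_abs, abs_mul]
  exact mul_le_mul (hgM ω) (hfb m ω) (abs_nonneg _) ((abs_nonneg _).trans (hgM ω))

variable [IsProbabilityMeasure μ] {Z : ℤ → Ω → ℝ} {M σ : ℝ} {u : ℕ → ℝ} {x : ℤ → Ω → ℝ}

lemma hasSum_integral_mul_linearProcess (hZm : ∀ t, AEStronglyMeasurable (Z t) μ)
    (hZM : ∀ t ω, |Z t ω| ≤ M) (hu : Summable fun m => |u m|)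
    (hx : ∀ t ω, HasSum (fun m : ℕ => Z (t - m) ω * u m) (x t ω))
    {g : Ω → ℝ} {Mg : ℝ} (hg : AEStronglyMeasurable g μ) (hgM : ∀ ω, |g ω| ≤ Mg) (t : ℤ) :
    HasSum (fun m : ℕ => (∫ ω, g ω * Z (t - m) ω ∂μ) * u m) (∫ ω, g ω * x t ω ∂μ) := by
  have hdom := hasSum_integral_mul_of_hasSum hg hgM
    (fun m : ℕ => (hZm (t - m)).mul_const (u m)) (b := fun m => M * |u m|)
    (fun m ω => by rw [abs_mul]; exact mul_le_mul_of_nonneg_right (hZM _ ω) (abs_nonneg _))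
    (hu.mul_left M) (hx t)
  simpa only [← mul_assoc, integral_mul_const] using hdom

end LinearProcess

structure IsBoundedWhiteNoise {Ω : Type*} [MeasurableSpace Ω] (μ : Measure Ω)
    (Z : ℤ → Ω → ℝ) (σ : ℝ) : Prop where
  aestronglyMeasurable : ∀ t, AEStronglyMeasurable (Z t) μ
  exists_bound : ∃ M, ∀ t ω, |Z t ω| ≤ M
  integral_eq_zero : ∀ t, ∫ ω, Z t ω ∂μ = 0
  integral_mul : ∀ s t, ∫ ω, Z s ω * Z t ω ∂μ = if s = t then σ else 0

namespace IsBoundedWhiteNoise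

variable {Ω : Type*} [MeasurableSpace Ω] {μ : Measure Ω}
  {Z : ℤ → Ω → ℝ} {σ : ℝ} {u : ℕ → ℝ} {x : ℤ → Ω → ℝ}

lemma covv_self (hZ : IsBoundedWhiteNoise μ Z σ) (t : ℤ) : covv μ (Z t) (Z t) = σ := by
  simpa [covv, expv, hZ.integral_eq_zero] using hZ.integral_mul t t

lemma integral_sq (hZ : IsBoundedWhiteNoise μ Z σ) (t : ℤ) : ∫ ω, Z t ω ^ 2 ∂μ = σ := by
  simpa [sq] using hZ.integral_mul t t

variable [IsProbabilityMeasure μ]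

lemma memLp (hZ : IsBoundedWhiteNoise μ Z σ) (p : ENNReal) (t : ℤ) : MemLp (Z t) p μ :=
  let ⟨M, hM⟩ := hZ.exists_bound
  .of_bound (hZ.aestronglyMeasurable t) M (ae_of_all _ (hM t))

lemma memLp_linearProcess (hZ : IsBoundedWhiteNoise μ Z σ) (hu : Summable fun m => |u m|)
    (hx : ∀ t ω, HasSum (fun m : ℕ => Z (t - m) ω * u m) (x t ω)) (p : ENNReal) (t : ℤ) :
    MemLp (x t) p μ :=
  let ⟨_, hM⟩ := hZ.exists_bound
  .of_bound (aestronglyMeasurable_of_hasSum (fun _ => (hZ.aestronglyMeasurable _).mul_const _)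
    (hx t)) _ (ae_of_all _ fun ω => abs_le_mul_tsum_of_hasSum (fun _ => hM _ ω) hu (hx t ω))

lemma integral_linearProcess_eq_zero (hZ : IsBoundedWhiteNoise μ Z σ) (hu : Summable fun m => |u m|)
    (hx : ∀ t ω, HasSum (fun m : ℕ => Z (t - m) ω * u m) (x t ω)) (t : ℤ) :
    ∫ ω, x t ω ∂μ = 0 := by
  obtain ⟨M, hM⟩ := hZ.exists_bound
  have h := hasSum_integral_mul_linearProcess hZ.aestronglyMeasurable hM hu hx
    aestronglyMeasurable_const (fun _ => (abs_one (α := ℝ)).le) t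
  simp only [one_mul, hZ.integral_eq_zero, zero_mul] at h
  exact h.unique hasSum_zero

lemma integral_sub_mul_linearProcess (hZ : IsBoundedWhiteNoise μ Z σ) (hu : Summable fun m => |u m|)
    (hx : ∀ t ω, HasSum (fun m : ℕ => Z (t - m) ω * u m) (x t ω)) (t : ℤ) (k : ℕ) :
    ∫ ω, Z (t - k) ω * x t ω ∂μ = σ * u k := by
  obtain ⟨M, hM⟩ := hZ.exists_bound
  have h := hasSum_integral_mul_linearProcess hZ.aestronglyMeasurable hM hu hx
    (hZ.aestronglyMeasurable (t - k)) (hM (t - k)) t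
  simp only [hZ.integral_mul, sub_right_inj, Nat.cast_inj, ite_mul, zero_mul] at h
  exact h.unique (by
    simpa using hasSum_single (f := fun m : ℕ => if k = m then σ * u m else 0) k
      fun m hm => if_neg (Ne.symm hm))

lemma integral_mul_linearProcess_of_lt (hZ : IsBoundedWhiteNoise μ Z σ)
    (hu : Summable fun m => |u m|)
    (hx : ∀ t ω, HasSum (fun m : ℕ => Z (t - m) ω * u m) (x t ω)) {s t : ℤ} (hts : t < s) :
    ∫ ω, Z s ω * x t ω ∂μ = 0 := by
  obtain ⟨M, hM⟩ := hZ.exists_bound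
  have h := hasSum_integral_mul_linearProcess hZ.aestronglyMeasurable hM hu hx
    (hZ.aestronglyMeasurable s) (hM s) t
  have hne : ∀ m : ℕ, s ≠ t - m := fun m => by omega
  simp only [hZ.integral_mul, hne, if_false, zero_mul] at h
  exact h.unique hasSum_zero

lemma hasSum_integral_linearProcess_mul_linearProcess (hZ : IsBoundedWhiteNoise μ Z σ)
    (hu : Summable fun m => |u m|) (hx : ∀ t ω, HasSum (fun m : ℕ => Z (t - m) ω * u m) (x t ω))
    {w : ℕ → ℝ} {y : ℤ → Ω → ℝ} (hw : Summable fun m => |w m|)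
    (hy : ∀ t ω, HasSum (fun m : ℕ => Z (t - m) ω * w m) (y t ω)) (t : ℤ) :
    HasSum (fun m => σ * u m * w m) (∫ ω, x t ω * y t ω ∂μ) := by
  obtain ⟨M, hM⟩ := hZ.exists_bound
  have h := hasSum_integral_mul_linearProcess hZ.aestronglyMeasurable hM hw hy
    (aestronglyMeasurable_of_hasSum (fun m => (hZ.aestronglyMeasurable _).mul_const (u m)) (hx t))
    (fun ω => abs_le_mul_tsum_of_hasSum (fun m => hM _ ω) hu (hx t ω)) t
  simpa only [mul_comm (x t _) (Z _ _), hZ.integral_sub_mul_linearProcess hu hx] using h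

end IsBoundedWhiteNoise

noncomputable def stateCov {Ω : Type*} [MeasurableSpace Ω] (μ : Measure Ω) {N : ℕ}
    (X : ℤ → Ω → (Fin N → ℝ)) : Matrix (Fin N) (Fin N) ℝ :=
  Matrix.of fun i j => covv μ (fun ω => X 0 ω i) (fun ω => X 0 ω j)

namespace IsBoundedWhiteNoise

variable {N : ℕ} {Ω : Type*} [MeasurableSpace Ω] {μ : Measure Ω} [IsProbabilityMeasure μ]
  {Z : ℤ → Ω → ℝ} {σ : ℝ} {u : ℕ → Fin N → ℝ} {X : ℤ → Ω → (Fin N → ℝ)}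

lemma hasSum_integral_state_mul_state (hZ : IsBoundedWhiteNoise μ Z σ)
    (hu : ∀ i, Summable fun m => |u m i|)
    (hX : ∀ i t ω, HasSum (fun m : ℕ => Z (t - m) ω * u m i) (X t ω i)) (t : ℤ) (i j : Fin N) :
    HasSum (fun m => (σ • u m) i * u m j) (∫ ω, X t ω i * X t ω j ∂μ) := by
  simpa only [Pi.smul_apply, smul_eq_mul] using
    hZ.hasSum_integral_linearProcess_mul_linearProcess (hu i) (hX i) (hu j) (hX j) t

lemma stateCov_apply (hZ : IsBoundedWhiteNoise μ Z σ) (hu : ∀ i, Summable fun m => |u m i|)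
    (hX : ∀ i t ω, HasSum (fun m : ℕ => Z (t - m) ω * u m i) (X t ω i)) (t : ℤ) (i j : Fin N) :
    stateCov μ X i j = ∫ ω, X t ω i * X t ω j ∂μ := by
  rw [(hZ.hasSum_integral_state_mul_state hu hX t i j).unique
    (hZ.hasSum_integral_state_mul_state hu hX 0 i j)]
  simp [stateCov, covv, expv, hZ.integral_linearProcess_eq_zero (hu _) (hX _)]

lemma ne_zero_of_isUnit_det_stateCov (hZ : IsBoundedWhiteNoise μ Z σ) (hN : 0 < N)
    (hu : ∀ i, Summable fun m => |u m i|)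
    (hX : ∀ i t ω, HasSum (fun m : ℕ => Z (t - m) ω * u m i) (X t ω i))
    (hΓ : IsUnit (stateCov μ X).det) : σ ≠ 0 := by
  rintro rfl
  have hΓ0 : stateCov μ X = 0 := Matrix.ext fun i j => by
    rw [hZ.stateCov_apply hu hX 0 i j]
    exact (hZ.hasSum_integral_state_mul_state hu hX 0 i j).unique (by simp)
  have : Nonempty (Fin N) := ⟨⟨0, hN⟩⟩
  simp [hΓ0] at hΓ

lemma memCapZ_eq (hZ : IsBoundedWhiteNoise μ Z σ) (hσ : σ ≠ 0)
    (hu : ∀ i, Summable fun m => |u m i|)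
    (hX : ∀ i t ω, HasSum (fun m : ℕ => Z (t - m) ω * u m i) (X t ω i))
    (hΓ : IsUnit (stateCov μ X).det) (k : ℕ) :
    memCapZ μ Z X k = ((stateCov μ X)⁻¹ *ᵥ (σ • u k)) ⬝ᵥ u k := by
  rw [memCapZ, iInf_integral_sq_sub_dotProduct_sub (hZ.memLp 2 _)
    (fun i => hZ.memLp_linearProcess (hu i) (hX i) 2 0) (hZ.integral_eq_zero _)
    (fun i => hZ.integral_linearProcess_eq_zero (hu i) (hX i) 0)
    (hZ.stateCov_apply hu hX 0) hΓ (v := σ • u k) fun i => ?_]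
  · rw [hZ.covv_self, hZ.integral_sq, dotProduct_smul, smul_eq_mul]
    field_simp
    ring
  · simpa using (hZ.integral_sub_mul_linearProcess (hu i) (hX i) 0 k).symm

lemma foreCapZ_eq_zero (hZ : IsBoundedWhiteNoise μ Z σ) (hσ : σ ≠ 0)
    (hu : ∀ i, Summable fun m => |u m i|)
    (hX : ∀ i t ω, HasSum (fun m : ℕ => Z (t - m) ω * u m i) (X t ω i))
    (hΓ : IsUnit (stateCov μ X).det) (k : ℕ) :
    foreCapZ μ Z X (k + 1) = 0 := by
  rw [foreCapZ, iInf_integral_sq_sub_dotProduct_sub (hZ.memLp 2 0)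
    (fun i => hZ.memLp_linearProcess (hu i) (hX i) 2 _) (hZ.integral_eq_zero 0)
    (fun i => hZ.integral_linearProcess_eq_zero (hu i) (hX i) _)
    (hZ.stateCov_apply hu hX _) hΓ (v := 0)
    fun i => (hZ.integral_mul_linearProcess_of_lt (hu i) (hX i) (by omega)).symm]
  simp [hZ.covv_self, hZ.integral_sq, hσ]

lemma hasSum_memCapZ (hZ : IsBoundedWhiteNoise μ Z σ) (hσ : σ ≠ 0)
    (hu : ∀ i, Summable fun m => |u m i|)
    (hX : ∀ i t ω, HasSum (fun m : ℕ => Z (t - m) ω * u m i) (X t ω i))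
    (hΓ : IsUnit (stateCov μ X).det) :
    HasSum (memCapZ μ Z X) N := by
  rw [show memCapZ μ Z X = _ from funext (hZ.memCapZ_eq hσ hu hX hΓ)]
  simpa using hasSum_inv_mulVec_dotProduct hΓ
    (v := fun k => σ • u k) (w := u) fun i j =>
      hZ.stateCov_apply hu hX 0 i j ▸ hZ.hasSum_integral_state_mul_state hu hX 0 i j

end IsBoundedWhiteNoise

lemma integral_mul_eq_ite_of_covv {Ω : Type*} [MeasurableSpace Ω] {μ : Measure Ω}
    {Z : ℤ → Ω → ℝ} (hZmean : ∀ t, expv μ (Z t) = 0) {γ : ℕ → ℝ}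
    (hγ : ∀ (t : ℤ) (k : ℕ), covv μ (Z t) (Z (t + k)) = γ k) (hwn : ∀ k : ℕ, k ≠ 0 → γ k = 0)
    (s t : ℤ) : ∫ ω, Z s ω * Z t ω ∂μ = if s = t then γ 0 else 0 := by
  wlog hst : s ≤ t generalizing s t
  · simpa only [mul_comm, eq_comm] using this t s (le_of_not_ge hst)
  obtain ⟨k, rfl⟩ := Int.le.dest hst
  have hcov : ∫ ω, Z s ω * Z (s + k) ω ∂μ = γ k := by simpa [covv, hZmean] using hγ s k
  rw [hcov]
  rcases eq_or_ne k 0 with rfl | hk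
  · simp
  · rw [hwn k hk, if_neg (by omega)]

lemma abs_pow_mulVec_apply_le {N : ℕ} {A : Matrix (Fin N) (Fin N) ℝ} {c : ℝ} (hc : 0 ≤ c)
    (hA : ∀ x : Fin N → ℝ, √(∑ i, (A *ᵥ x) i ^ 2) ≤ c * √(∑ i, x i ^ 2))
    (C : Fin N → ℝ) (m : ℕ) (i : Fin N) :
    |(A ^ m *ᵥ C) i| ≤ c ^ m * √(∑ i, C i ^ 2) := by
  have hnorm : √(∑ i, (A ^ m *ᵥ C) i ^ 2) ≤ c ^ m * √(∑ i, C i ^ 2) := by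
    induction m with
    | zero => simp
    | succ m ih =>
      rw [pow_succ', ← mulVec_mulVec, pow_succ', mul_assoc]
      exact (hA _).trans (mul_le_mul_of_nonneg_left ih hc)
  refine le_trans ?_ hnorm
  rw [← Real.sqrt_sq_eq_abs]
  exact Real.sqrt_le_sqrt (Finset.single_le_sum (fun j _ => sq_nonneg _) (Finset.mem_univ i))

theorem stmt_11_general {N : ℕ} (hN : 0 < N)
    (A : Matrix (Fin N) (Fin N) ℝ) (C : Fin N → ℝ)
    (hA : ∃ c : ℝ, 0 ≤ c ∧ c < 1 ∧ ∀ x : Fin N → ℝ,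
      Real.sqrt (∑ i, (A *ᵥ x) i ^ 2) ≤ c * Real.sqrt (∑ i, x i ^ 2))
    (D : Set ℝ) (hD : IsCompact D)
    {Ω : Type*} [MeasurableSpace Ω] (μ : Measure Ω) [IsProbabilityMeasure μ]
    (Z : ℤ → Ω → ℝ) (hZD : ∀ t ω, Z t ω ∈ D)
    -- Z is square integrable, zero mean, and strictly stationary
    (hZ2 : ∀ t, MemLp (Z t) 2 μ)
    (hZmean : ∀ t, expv μ (Z t) = 0)
    -- autocovariance function γ of Z, absolutely summable
    (γ : ℕ → ℝ) (hγ : ∀ (t : ℤ) (k : ℕ), covv μ (Z t) (Z (t + k)) = γ k)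
    -- Z is a white noise
    (hwn : ∀ k : ℕ, k ≠ 0 → γ k = 0)
    -- X = U^{A,C}(Z) is the state process: X_t = ∑_{j≥0} A^j C Z_{t-j}
    (X : ℤ → Ω → (Fin N → ℝ))
    (hX : ∀ t ω, HasSum (fun j : ℕ => Z (t - (j : ℤ)) ω • ((A ^ j) *ᵥ C)) (X t ω))
    -- the state covariance matrix Γ_X is non-singular
    (hΓinv : IsUnit (Matrix.of fun i j : Fin N =>
      covv μ (fun ω => X 0 ω i) (fun ω => X 0 ω j)).det) :
    (Summable (fun k : ℕ => memCapZ μ Z X k) ∧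
      ∑' k : ℕ, memCapZ μ Z X k = (N : ℝ)) ∧
    ∑' k : ℕ, foreCapZ μ Z X (k + 1) = 0 := by
  obtain ⟨c, hc0, hc1, hAc⟩ := hA
  have hZ : IsBoundedWhiteNoise μ Z (γ 0) :=
    { aestronglyMeasurable := fun t => (hZ2 t).1
      exists_bound :=
        let ⟨M, hM⟩ := hD.isBounded.exists_norm_le
        ⟨M, fun t ω => hM _ (hZD t ω)⟩
      integral_eq_zero := hZmean
      integral_mul := integral_mul_eq_ite_of_covv hZmean hγ hwn }
  have hu : ∀ i, Summable fun m => |(A ^ m *ᵥ C) i| := fun i =>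
    Summable.of_nonneg_of_le (fun _ => abs_nonneg _) (abs_pow_mulVec_apply_le hc0 hAc C · i)
      ((summable_geometric_of_lt_one hc0 hc1).mul_right _)
  have hXi : ∀ i t ω, HasSum (fun m : ℕ => Z (t - m) ω * (A ^ m *ᵥ C) i) (X t ω i) :=
    fun i t ω => by simpa using Pi.hasSum.1 (hX t ω) i
  have hσ := hZ.ne_zero_of_isUnit_det_stateCov hN hu hXi hΓinv
  have hmem := hZ.hasSum_memCapZ hσ hu hXi hΓinv
  refine ⟨⟨hmem.summable, hmem.tsum_eq⟩, ?_⟩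
  simp [hZ.foreCapZ_eq_zero hσ hu hXi hΓinv]

theorem stmt_11 {N : ℕ} (hN : 0 < N)
    (A : Matrix (Fin N) (Fin N) ℝ) (C : Fin N → ℝ)
    (hA : ∃ c : ℝ, 0 ≤ c ∧ c < 1 ∧ ∀ x : Fin N → ℝ,
      Real.sqrt (∑ i, (A *ᵥ x) i ^ 2) ≤ c * Real.sqrt (∑ i, x i ^ 2))
    (D : Set ℝ) (hD : IsCompact D)
    {Ω : Type*} [MeasurableSpace Ω] (μ : Measure Ω) [IsProbabilityMeasure μ]
    (Z : ℤ → Ω → ℝ) (hZD : ∀ t ω, Z t ω ∈ D)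
    -- Z is square integrable, zero mean, and strictly stationary
    (hZ2 : ∀ t, MemLp (Z t) 2 μ)
    (hZmean : ∀ t, expv μ (Z t) = 0)
    (hstat : ∀ τ : ℤ, Measure.map (fun ω => fun t : ℤ => Z (t + τ) ω) μ =
      Measure.map (fun ω => fun t : ℤ => Z t ω) μ)
    -- autocovariance function γ of Z, absolutely summable
    (γ : ℕ → ℝ) (hγ : ∀ (t : ℤ) (k : ℕ), covv μ (Z t) (Z (t + k)) = γ k)
    (habs : Summable fun j : ℕ => |γ j|)
    -- the spectral density is non-negative and vanishes at most countably often
    (hfpos : ∀ x ∈ Set.Icc (-Real.pi) Real.pi, 0 ≤ (specDens γ x).re)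
    (hfzero : Set.Countable {x ∈ Set.Icc (-Real.pi) Real.pi | (specDens γ x).re = 0})
    -- Z is a white noise
    (hwn : ∀ k : ℕ, k ≠ 0 → γ k = 0)
    -- X = U^{A,C}(Z) is the state process: X_t = ∑_{j≥0} A^j C Z_{t-j}
    (X : ℤ → Ω → (Fin N → ℝ))
    (hX : ∀ t ω, HasSum (fun j : ℕ => Z (t - (j : ℤ)) ω • ((A ^ j) *ᵥ C)) (X t ω))
    -- the state covariance matrix Γ_X is non-singular
    (hΓinv : IsUnit (Matrix.of fun i j : Fin N =>
      covv μ (fun ω => X 0 ω i) (fun ω => X 0 ω j)).det) :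
    (Summable (fun k : ℕ => memCapZ μ Z X k) ∧
      ∑' k : ℕ, memCapZ μ Z X k = (N : ℝ)) ∧
    ∑' k : ℕ, foreCapZ μ Z X (k + 1) = 0 :=
  stmt_11_general hN A C hA D hD μ Z hZD hZ2 hZmean γ hγ hwn X hX hΓinv
end

section
/- Consider the linear state system F(x, z) := Ax + Cz with A ∈ M_N(ℝ), σ_max(A) < 1, C ∈ ℝ^N, and let the input process Z : Ω → D^ℤ (D ⊂ ℝ compact) be a strictly stationary white noise with variance γ(0) > 0. Let X := span{C, AC, …, A^{N−1}C}, ℝ^N = X ⊕ V a direct sum decomposition, and Ā := π_X A i_X the induced map on X. If Ā is diagonalizable with non-zero eigenvalues, then the total memory capacity and the total forecasting capacity of F with respect to Z are MC = rank R(A, C) = dim span{C, AC, …, A^{N−1}C} and FC = 0. -/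
open Matrix MeasureTheory

/-- The subspace X = span{C, AC, …, A^{N-1}C} ⊆ ℝ^N. -/
noncomputable def ctrlSpan {N : ℕ} (A : Matrix (Fin N) (Fin N) ℝ) (C : Fin N → ℝ) :
    Submodule ℝ (Fin N → ℝ) :=
  Submodule.span ℝ (Set.range fun j : Fin N => (A ^ (j : ℕ)) *ᵥ C)

/-- The controllability matrix R(A,C) = (C | AC | ⋯ | A^{N-1}C). -/
noncomputable def ctrlMat {N : ℕ} (A : Matrix (Fin N) (Fin N) ℝ) (C : Fin N → ℝ) :
    Matrix (Fin N) (Fin N) ℝ :=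
  Matrix.of fun i j : Fin N => ((A ^ (j : ℕ)) *ᵥ C) i

/-- The reduced connectivity map Ā = π_X ∘ A ∘ i_X on X = span{C, AC, …}. -/
noncomputable def redA {N : ℕ} (A : Matrix (Fin N) (Fin N) ℝ) (C : Fin N → ℝ)
    (V : Submodule ℝ (Fin N → ℝ)) (h : IsCompl (ctrlSpan A C) V) :
    ctrlSpan A C →ₗ[ℝ] ctrlSpan A C :=
  Submodule.linearProjOfIsCompl (ctrlSpan A C) V h ∘ₗ
    (A.mulVecLin ∘ₗ (ctrlSpan A C).subtype)

/-!
Write `v j = A ^ j *ᵥ C`, so that `X t = ∑ j, Z (t - j) • v j`. Because the inputs are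
uncorrelated with variance `γ`, the mean-square error of the readout `(W, a)` against `Z s` is
`γ - 2 E[Z s (W ⬝ᵥ X t)] + γ ⟪T W, W⟫ + a²`, where `T = ∑ j, v j ⊗ v j` is the Gram operator of
the sequence `v`. The cross term is `γ ⟪W, v k⟫` for the past input `s = t - k` and vanishes for
a future input, so every forecasting capacity is `0`, while minimising the quadratic gives
`MC_{-k} = ⟪u k, v k⟫` for any solution of `T (u k) = v k`; such solutions exist because the range
of `T` contains `span (range v)`. Finally `∑ k, ⟪u k, v k⟫` is the trace of `T⁺ T`, the orthogonal
projection onto `span (range v) = span {C, …, A^{N-1} C}`, whose dimension is the rank of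
`R(A, C)`.
-/

open InnerProductSpace Module Polynomial WithLp

local notation "⟪" x ", " y "⟫" => @inner ℝ _ _ x y

noncomputable def gramOp {E : Type*} [NormedAddCommGroup E] [InnerProductSpace ℝ E]
    [CompleteSpace E] (v : ℕ → E) : E →L[ℝ] E :=
  ∑' j, rankOne ℝ (v j) (v j)

section Gram

variable {E : Type*} [NormedAddCommGroup E] [InnerProductSpace ℝ E] [CompleteSpace E]
  {v : ℕ → E}

theorem hasSum_inner_gramOp (hv : Summable fun j => ‖v j‖ ^ 2) (x y : E) :
    HasSum (fun j => ⟪v j, x⟫ * ⟪v j, y⟫) ⟪gramOp v x, y⟫ := by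
  have hT : HasSum (fun j => rankOne ℝ (v j) (v j)) (gramOp v) :=
    (Summable.of_norm (by simpa [sq] using hv)).hasSum
  have := (hT.mapL (ContinuousLinearMap.apply ℝ E x)).mapL (innerSL ℝ y)
  simpa [real_inner_smul_right, real_inner_comm y] using this

theorem inner_gramOp_comm (hv : Summable fun j => ‖v j‖ ^ 2) (x y : E) :
    ⟪gramOp v x, y⟫ = ⟪x, gramOp v y⟫ := by
  rw [← real_inner_comm x (gramOp v y), ← (hasSum_inner_gramOp hv x y).tsum_eq,
    ← (hasSum_inner_gramOp hv y x).tsum_eq]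
  simp_rw [mul_comm]

theorem inner_gramOp_self_nonneg (hv : Summable fun j => ‖v j‖ ^ 2) (x : E) :
    0 ≤ ⟪gramOp v x, x⟫ :=
  (hasSum_inner_gramOp hv x x).nonneg fun _ => mul_self_nonneg _

theorem inner_eq_zero_of_inner_gramOp_self_eq_zero (hv : Summable fun j => ‖v j‖ ^ 2) {x : E}
    (hx : ⟪gramOp v x, x⟫ = 0) (k : ℕ) : ⟪v k, x⟫ = 0 := by
  have h := hasSum_inner_gramOp hv x x
  rw [hx, hasSum_zero_iff_of_nonneg fun _ => mul_self_nonneg _] at h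
  exact mul_self_eq_zero.mp (congrFun h k)

theorem span_le_range_gramOp [FiniteDimensional ℝ E] (hv : Summable fun j => ‖v j‖ ^ 2) :
    Submodule.span ℝ (Set.range v) ≤ LinearMap.range (gramOp v : E →ₗ[ℝ] E) := by
  rw [Submodule.span_le, ← (LinearMap.range (gramOp v : E →ₗ[ℝ] E)).orthogonal_orthogonal]
  rintro _ ⟨k, rfl⟩
  refine Submodule.mem_orthogonal' _ _ |>.mpr fun x hx => ?_
  have hTx : gramOp v x ∈ LinearMap.range (gramOp v : E →ₗ[ℝ] E) := ⟨x, rfl⟩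
  exact inner_eq_zero_of_inner_gramOp_self_eq_zero hv
    (Submodule.inner_right_of_mem_orthogonal hTx hx) k

theorem neg_inner_le_inner_gramOp_sub (hv : Summable fun j => ‖v j‖ ^ 2) {u y : E}
    (hu : gramOp v u = y) (x : E) : -⟪u, y⟫ ≤ ⟪gramOp v x, x⟫ - 2 * ⟪y, x⟫ := by
  have h := inner_gramOp_self_nonneg hv (x - u)
  rw [map_sub, hu, inner_sub_left, inner_sub_right, inner_sub_right,
    inner_gramOp_comm hv x u, hu, real_inner_comm y x, real_inner_comm u y] at h
  linarith

theorem hasSum_inner_of_gramOp_eq [FiniteDimensional ℝ E] (hv : Summable fun j => ‖v j‖ ^ 2)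
    {u : ℕ → E} (hu : ∀ k, gramOp v (u k) = v k) :
    HasSum (fun k => ⟪u k, v k⟫) (finrank ℝ (Submodule.span ℝ (Set.range v))) := by
  set S := Submodule.span ℝ (Set.range v)
  set e := stdOrthonormalBasis ℝ S
  have hmem : ∀ k, v k ∈ S := fun k => Submodule.subset_span ⟨k, rfl⟩
  choose f hf using fun i => span_le_range_gramOp hv (e i).2
  simp only [ContinuousLinearMap.coe_coe] at hf
  -- `∑ k, ⟪u k, v k⟫` is the trace of `T⁻¹ T` on `S`, computed in the orthonormal basis `e`.
  have hexpand : ∀ k, ⟪u k, v k⟫ = ∑ i, ⟪v k, f i⟫ * ⟪v k, (e i : E)⟫ := by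
    intro k
    have hrepr := congrArg Subtype.val (e.sum_repr' ⟨v k, hmem k⟩)
    simp only [Submodule.coe_sum, Submodule.coe_smul, Submodule.coe_inner] at hrepr
    conv_lhs => rw [← hrepr]
    simp only [inner_sum, real_inner_smul_right]
    refine Finset.sum_congr rfl fun i _ => ?_
    have hcoord : ⟪u k, (e i : E)⟫ = ⟪v k, f i⟫ := by
      rw [← hf i, ← inner_gramOp_comm hv, hu]
    rw [hcoord, real_inner_comm (v k) (e i : E), mul_comm]
  rw [funext hexpand]
  convert hasSum_sum fun i _ => hasSum_inner_gramOp hv (f i) (e i : E) using 1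
  have hnorm : ∀ i, ‖(e i : E)‖ = 1 := e.orthonormal.1
  simp [hf, hnorm]

end Gram

section SeriesOfBoundedFunctions

variable {Ω : Type*} {f : ℕ → Ω → ℝ} {c : ℕ → ℝ} {g : Ω → ℝ} {M : ℝ}

theorem abs_le_of_hasSum_mul (hfM : ∀ j ω, |f j ω| ≤ M) (hc : Summable fun j => |c j|)
    (hg : ∀ ω, HasSum (fun j => f j ω * c j) (g ω)) (ω : Ω) : |g ω| ≤ M * ∑' j, |c j| :=
  (hg ω).norm_le_of_bounded (hc.hasSum.mul_left M) fun j => by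
    rw [Real.norm_eq_abs, abs_mul]
    exact mul_le_mul_of_nonneg_right (hfM j ω) (abs_nonneg _)

variable [MeasurableSpace Ω] {μ : Measure Ω}

theorem aestronglyMeasurable_of_hasSum_s19 (hf : ∀ j, AEStronglyMeasurable (f j) μ)
    (hg : ∀ ω, HasSum (fun j => f j ω * c j) (g ω)) : AEStronglyMeasurable g μ :=
  aestronglyMeasurable_of_tendsto_ae _
    (fun _ => Finset.aestronglyMeasurable_fun_sum _ fun j _ => (hf j).mul_const (c j))
    (ae_of_all _ fun ω => (hg ω).tendsto_sum_nat)

theorem hasSum_integral_mul_of_hasSum_s19 (hf : ∀ j, AEStronglyMeasurable (f j) μ)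
    (hfM : ∀ j ω, |f j ω| ≤ M) (hc : Summable fun j => |c j|)
    (hg : ∀ ω, HasSum (fun j => f j ω * c j) (g ω)) {h : Ω → ℝ} (hh : Integrable h μ) :
    HasSum (fun j => (∫ ω, h ω * f j ω ∂μ) * c j) (∫ ω, h ω * g ω ∂μ) := by
  simp_rw [← integral_mul_const, mul_assoc]
  refine hasSum_integral_of_dominated_convergence (fun j ω => M * |c j| * |h ω|)
    (fun j => hh.aestronglyMeasurable.mul ((hf j).mul_const _))
    (fun j => ae_of_all _ fun ω => ?_) (ae_of_all _ fun ω => (hc.mul_left M).mul_right _)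
    ?_ (ae_of_all _ fun ω => (hg ω).mul_left (h ω))
  · calc ‖h ω * (f j ω * c j)‖ = |f j ω| * |c j| * |h ω| := by
          rw [Real.norm_eq_abs, abs_mul, abs_mul, mul_comm]
      _ ≤ M * |c j| * |h ω| := by gcongr; exact hfM j ω
  · simp_rw [tsum_mul_right]
    exact hh.abs.const_mul _

end SeriesOfBoundedFunctions

structure IsBoundedWhiteNoise_s19 {Ω : Type*} [MeasurableSpace Ω] (μ : Measure Ω)
    (Z : ℤ → Ω → ℝ) (γ : ℝ) : Prop where
  aestronglyMeasurable : ∀ t, AEStronglyMeasurable (Z t) μ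
  bounded : ∃ M, ∀ t ω, |Z t ω| ≤ M
  integral_eq_zero : ∀ t, ∫ ω, Z t ω ∂μ = 0
  integral_mul : ∀ s t, ∫ ω, Z s ω * Z t ω ∂μ = if s = t then γ else 0

theorem IsBoundedWhiteNoise_s19.of_covv {Ω : Type*} [MeasurableSpace Ω] {μ : Measure Ω}
    {Z : ℤ → Ω → ℝ} {γ : ℝ} (hm : ∀ t, AEStronglyMeasurable (Z t) μ)
    (hb : ∃ M, ∀ t ω, |Z t ω| ≤ M) (hmean : ∀ t, expv μ (Z t) = 0)
    (hwn : ∀ s t : ℤ, s ≠ t → covv μ (Z s) (Z t) = 0) (hvar : ∀ t, covv μ (Z t) (Z t) = γ) :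
    IsBoundedWhiteNoise_s19 μ Z γ where
  aestronglyMeasurable := hm
  bounded := hb
  integral_eq_zero := hmean
  integral_mul s t := by
    have hcovv : covv μ (Z s) (Z t) = ∫ ω, Z s ω * Z t ω ∂μ := by simp [covv, hmean]
    split_ifs with hst
    · rw [← hcovv, hst, hvar]
    · rw [← hcovv, hwn s t hst]

namespace IsBoundedWhiteNoise_s19

variable {Ω : Type*} [MeasurableSpace Ω] {μ : Measure Ω}
  {Z : ℤ → Ω → ℝ} {γ : ℝ} (hZ : IsBoundedWhiteNoise_s19 μ Z γ)
  {c : ℕ → ℝ} (hc : Summable fun j => |c j|) {g : Ω → ℝ} {t : ℤ}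
  (hg : ∀ ω, HasSum (fun j : ℕ => Z (t - j) ω * c j) (g ω))
include hZ

theorem covv_self_s19 (s : ℤ) : covv μ (Z s) (Z s) = γ := by
  simp [covv, expv, hZ.integral_eq_zero, hZ.integral_mul]

theorem integrable [IsFiniteMeasure μ] (s : ℤ) : Integrable (Z s) μ :=
  have ⟨M, hM⟩ := hZ.bounded
  .of_bound (hZ.aestronglyMeasurable s) M (ae_of_all _ (hM s))

include hc hg

theorem integrable_of_hasSum [IsFiniteMeasure μ] : Integrable g μ :=
  have ⟨_, hM⟩ := hZ.bounded
  .of_bound (aestronglyMeasurable_of_hasSum_s19 (fun _ => hZ.aestronglyMeasurable _) hg) _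
    (ae_of_all _ (abs_le_of_hasSum_mul (fun _ => hM _) hc hg))

theorem hasSum_integral_mul {h : Ω → ℝ} (hh : Integrable h μ) :
    HasSum (fun j : ℕ => (∫ ω, h ω * Z (t - j) ω ∂μ) * c j) (∫ ω, h ω * g ω ∂μ) :=
  have ⟨_, hM⟩ := hZ.bounded
  hasSum_integral_mul_of_hasSum_s19 (fun _ => hZ.aestronglyMeasurable _) (fun _ => hM _) hc hg hh

theorem integral_lag_mul [IsFiniteMeasure μ] (k : ℕ) : ∫ ω, Z (t - k) ω * g ω ∂μ = γ * c k := by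
  refine (hZ.hasSum_integral_mul hc hg (hZ.integrable _)).unique ?_
  convert hasSum_ite_eq k (γ * c k) using 2 with j
  simp_rw [hZ.integral_mul, sub_right_inj, Nat.cast_inj, eq_comm (a := k)]
  split_ifs with hjk <;> simp [hjk]

theorem integral_mul_eq_zero_of_lt [IsFiniteMeasure μ] {s : ℤ} (hts : t < s) :
    ∫ ω, Z s ω * g ω ∂μ = 0 := by
  refine (hZ.hasSum_integral_mul hc hg (hZ.integrable _)).unique ?_
  convert hasSum_zero with j
  rw [hZ.integral_mul, if_neg (by omega), zero_mul]

theorem integral_eq_zero_of_hasSum [IsFiniteMeasure μ] : ∫ ω, g ω ∂μ = 0 := by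
  simpa [hZ.integral_eq_zero] using
    (hZ.hasSum_integral_mul hc hg (integrable_const 1)).tsum_eq.symm

theorem integral_mul_self_of_hasSum [IsFiniteMeasure μ] :
    ∫ ω, g ω * g ω ∂μ = γ * ∑' j, c j ^ 2 := by
  rw [← (hZ.hasSum_integral_mul hc hg (hZ.integrable_of_hasSum hc hg)).tsum_eq, ← tsum_mul_left]
  refine tsum_congr fun j => ?_
  simp_rw [mul_comm (g _), hZ.integral_lag_mul hc hg]
  ring

theorem integral_sq_sub_sub [IsProbabilityMeasure μ] (s : ℤ) (a : ℝ) :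
    ∫ ω, (Z s ω - g ω - a) ^ 2 ∂μ = γ - 2 * ∫ ω, Z s ω * g ω ∂μ + γ * ∑' j, c j ^ 2 + a ^ 2 := by
  have hZs := hZ.integrable s
  have hgi := hZ.integrable_of_hasSum hc hg
  obtain ⟨M, hM⟩ := hZ.bounded
  have hbdd : ∀ᵐ ω ∂μ, ‖Z s ω‖ ≤ M := ae_of_all _ (hM s)
  have hZZ := hZs.bdd_mul (hZ.aestronglyMeasurable s) hbdd
  have hZg := hgi.bdd_mul (hZ.aestronglyMeasurable s) hbdd
  have hgg : Integrable (fun ω => g ω * g ω) μ :=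
    hgi.bdd_mul hgi.aestronglyMeasurable
      (ae_of_all _ (abs_le_of_hasSum_mul (fun _ => hM _) hc hg))
  have hexpand : (fun ω => (Z s ω - g ω - a) ^ 2) = fun ω =>
      Z s ω * Z s ω - 2 * (Z s ω * g ω) + g ω * g ω - 2 * a * Z s ω + 2 * a * g ω + a ^ 2 := by
    funext ω; ring
  rw [hexpand, integral_add, integral_add, integral_sub, integral_add, integral_sub,
    integral_const_mul, integral_const_mul, integral_const_mul, integral_const,
    hZ.integral_mul, if_pos rfl, hZ.integral_eq_zero, hZ.integral_eq_zero_of_hasSum hc hg,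
    hZ.integral_mul_self_of_hasSum hc hg]
  · simp
  all_goals fun_prop

end IsBoundedWhiteNoise_s19

noncomputable def krylovSeq {N : ℕ} (A : Matrix (Fin N) (Fin N) ℝ) (C : Fin N → ℝ) (j : ℕ) :
    EuclideanSpace ℝ (Fin N) :=
  toLp 2 ((A ^ j) *ᵥ C)

section LinearSystem

variable {N : ℕ} (A : Matrix (Fin N) (Fin N) ℝ) (C : Fin N → ℝ)

theorem rank_ctrlMat : (ctrlMat A C).rank = finrank ℝ (ctrlSpan A C) := by
  rw [Matrix.rank_eq_finrank_span_cols, ctrlSpan]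
  rfl

-- Cayley–Hamilton: `A ^ m` is a polynomial in `A` of degree `< N`.
theorem pow_mulVec_mem_ctrlSpan (m : ℕ) : (A ^ m) *ᵥ C ∈ ctrlSpan A C := by
  rcases Nat.eq_zero_or_pos N with rfl | hN
  · rw [Subsingleton.elim ((A ^ m) *ᵥ C) 0]
    exact zero_mem _
  have hdeg : (X ^ m %ₘ A.charpoly).natDegree < N := by
    have hne : A.charpoly ≠ 1 := fun h => by
      have hdim := A.charpoly_natDegree_eq_dim
      rw [h, natDegree_one, Fintype.card_fin] at hdim
      omega
    simpa using natDegree_modByMonic_lt (X ^ m) A.charpoly_monic hne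
  rw [A.pow_eq_aeval_mod_charpoly, aeval_eq_sum_range' hdeg, sum_mulVec]
  refine Submodule.sum_mem _ fun i hi => ?_
  rw [smul_mulVec]
  exact Submodule.smul_mem _ _ (Submodule.subset_span ⟨⟨i, Finset.mem_range.1 hi⟩, rfl⟩)

theorem finrank_span_krylovSeq :
    finrank ℝ (Submodule.span ℝ (Set.range (krylovSeq A C))) = finrank ℝ (ctrlSpan A C) := by
  have hspan : Submodule.span ℝ (Set.range fun j : ℕ => (A ^ j) *ᵥ C) = ctrlSpan A C :=
    le_antisymm (Submodule.span_le.2 <| Set.range_subset_iff.2 (pow_mulVec_mem_ctrlSpan A C))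
      (Submodule.span_mono <| Set.range_subset_iff.2 fun j => ⟨j, rfl⟩)
  rw [← hspan, ← LinearEquiv.finrank_map_eq (WithLp.linearEquiv 2 ℝ (Fin N → ℝ)).symm,
    Submodule.map_span, ← Set.range_comp]
  rfl

theorem norm_krylovSeq_le {c : ℝ} (hc0 : 0 ≤ c)
    (hA : ∀ x, ‖toLp 2 (A *ᵥ x)‖ ≤ c * ‖toLp 2 x‖) (j : ℕ) :
    ‖krylovSeq A C j‖ ≤ c ^ j * ‖toLp 2 C‖ := by
  induction j with
  | zero => simp [krylovSeq]
  | succ j ih =>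
    calc ‖krylovSeq A C (j + 1)‖ = ‖toLp 2 (A *ᵥ (A ^ j *ᵥ C))‖ := by
          rw [krylovSeq, pow_succ', ← mulVec_mulVec]
      _ ≤ c * (c ^ j * ‖toLp 2 C‖) := (hA _).trans (mul_le_mul_of_nonneg_left ih hc0)
      _ = c ^ (j + 1) * ‖toLp 2 C‖ := by ring

theorem summable_norm_krylovSeq_pow {c : ℝ} (hc0 : 0 ≤ c) (hc1 : c < 1)
    (hA : ∀ x, ‖toLp 2 (A *ᵥ x)‖ ≤ c * ‖toLp 2 x‖) {p : ℕ} (hp : p ≠ 0) :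
    Summable fun j => ‖krylovSeq A C j‖ ^ p := by
  refine Summable.of_nonneg_of_le (fun _ => by positivity) (fun j => ?_)
    ((summable_geometric_of_lt_one (by positivity) (pow_lt_one₀ hc0 hc1 hp)).mul_right
      (‖toLp 2 C‖ ^ p))
  rw [← pow_mul, mul_comm p, pow_mul, ← mul_pow]
  exact pow_le_pow_left₀ (norm_nonneg _) (norm_krylovSeq_le A C hc0 hA j) p

theorem hasSum_dotProduct_of_hasSum {z : ℕ → ℝ} {x : Fin N → ℝ}
    (hx : HasSum (fun j => z j • ((A ^ j) *ᵥ C)) x) (W : Fin N → ℝ) :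
    HasSum (fun j => z j * ⟪krylovSeq A C j, toLp 2 W⟫) (W ⬝ᵥ x) := by
  simpa [krylovSeq, EuclideanSpace.inner_toLp_toLp, dotProduct_smul] using
    hx.mapL (LinearMap.toContinuousLinearMap (dotProductBilin ℝ ℝ W))

theorem summable_abs_inner_krylovSeq (hw : Summable fun j => ‖krylovSeq A C j‖)
    (x : EuclideanSpace ℝ (Fin N)) : Summable fun j => |⟪krylovSeq A C j, x⟫| :=
  .of_nonneg_of_le (fun _ => abs_nonneg _) (fun _ => abs_real_inner_le_norm _ _) (hw.mul_right _)

end LinearSystem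

section Capacities

variable {N : ℕ} {A : Matrix (Fin N) (Fin N) ℝ} {C : Fin N → ℝ}
  {Ω : Type*} [MeasurableSpace Ω] {μ : Measure Ω} [IsProbabilityMeasure μ]
  {Z : ℤ → Ω → ℝ} {γ : ℝ} {X : ℤ → Ω → (Fin N → ℝ)}
  (hZ : IsBoundedWhiteNoise_s19 μ Z γ) (hw1 : Summable fun j => ‖krylovSeq A C j‖)
  (hX : ∀ t ω, HasSum (fun j : ℕ => Z (t - j) ω • ((A ^ j) *ᵥ C)) (X t ω))
include hZ hw1 hX

theorem integral_lag_mul_dotProduct_state (t : ℤ) (k : ℕ) (W : Fin N → ℝ) :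
    ∫ ω, Z (t - k) ω * (W ⬝ᵥ X t ω) ∂μ = γ * ⟪krylovSeq A C k, toLp 2 W⟫ :=
  hZ.integral_lag_mul (summable_abs_inner_krylovSeq A C hw1 _)
    (fun ω => hasSum_dotProduct_of_hasSum A C (hX t ω) W) k

theorem integral_mul_dotProduct_state_eq_zero {s t : ℤ} (hts : t < s) (W : Fin N → ℝ) :
    ∫ ω, Z s ω * (W ⬝ᵥ X t ω) ∂μ = 0 :=
  hZ.integral_mul_eq_zero_of_lt (summable_abs_inner_krylovSeq A C hw1 _)
    (fun ω => hasSum_dotProduct_of_hasSum A C (hX t ω) W) hts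

variable (hw2 : Summable fun j => ‖krylovSeq A C j‖ ^ 2)
include hw2

theorem integral_sq_sub_dotProduct_state (s t : ℤ) (W : Fin N → ℝ) (a : ℝ) :
    ∫ ω, (Z s ω - W ⬝ᵥ X t ω - a) ^ 2 ∂μ
      = γ - 2 * ∫ ω, Z s ω * (W ⬝ᵥ X t ω) ∂μ
        + γ * ⟪gramOp (krylovSeq A C) (toLp 2 W), toLp 2 W⟫ + a ^ 2 := by
  rw [hZ.integral_sq_sub_sub (summable_abs_inner_krylovSeq A C hw1 _)
    (fun ω => hasSum_dotProduct_of_hasSum A C (hX t ω) W), ← (hasSum_inner_gramOp hw2 _ _).tsum_eq]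
  simp_rw [sq]

theorem memCapZ_eq (hγ : 0 < γ) {k : ℕ} {u : EuclideanSpace ℝ (Fin N)}
    (hu : gramOp (krylovSeq A C) u = krylovSeq A C k) :
    memCapZ μ Z X k = ⟪u, krylovSeq A C k⟫ := by
  have hJ : ∀ p : (Fin N → ℝ) × ℝ, ∫ ω, (Z (-(k : ℤ)) ω - p.1 ⬝ᵥ X 0 ω - p.2) ^ 2 ∂μ =
      γ * (1 - 2 * ⟪krylovSeq A C k, toLp 2 p.1⟫
        + ⟪gramOp (krylovSeq A C) (toLp 2 p.1), toLp 2 p.1⟫) + p.2 ^ 2 := fun p => by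
    rw [integral_sq_sub_dotProduct_state hZ hw1 hX hw2, ← zero_sub,
      integral_lag_mul_dotProduct_state hZ hw1 hX]
    ring
  have hmin : ⨅ p : (Fin N → ℝ) × ℝ, ∫ ω, (Z (-(k : ℤ)) ω - p.1 ⬝ᵥ X 0 ω - p.2) ^ 2 ∂μ =
      γ * (1 - ⟪u, krylovSeq A C k⟫) := by
    refine IsLeast.csInf_eq ⟨⟨(ofLp u, 0), ?_⟩, Set.forall_mem_range.2 fun p => ?_⟩ <;>
      beta_reduce
    · rw [hJ, toLp_ofLp, hu, real_inner_comm]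
      ring
    · have hquad := neg_inner_le_inner_gramOp_sub hw2 hu (toLp 2 p.1)
      rw [hJ]
      nlinarith [sq_nonneg p.2]
  rw [memCapZ, hZ.covv_self_s19, hmin]
  field_simp
  ring

theorem foreCapZ_succ_eq_zero (hγ : 0 < γ) (k : ℕ) : foreCapZ μ Z X (k + 1) = 0 := by
  have hmin : ⨅ p : (Fin N → ℝ) × ℝ,
      ∫ ω, (Z 0 ω - p.1 ⬝ᵥ X (-((k + 1 : ℕ) : ℤ)) ω - p.2) ^ 2 ∂μ = γ := by
    refine IsLeast.csInf_eq ⟨⟨0, ?_⟩, Set.forall_mem_range.2 fun p => ?_⟩ <;>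
      beta_reduce <;>
      rw [integral_sq_sub_dotProduct_state hZ hw1 hX hw2,
      integral_mul_dotProduct_state_eq_zero hZ hw1 hX (by omega)]
    · simp
    · nlinarith [sq_nonneg p.2, inner_gramOp_self_nonneg hw2 (toLp 2 p.1)]
  rw [foreCapZ, hZ.covv_self_s19, hmin]
  field_simp
  ring

end Capacities

theorem stmt_19_general {N : ℕ}
    (A : Matrix (Fin N) (Fin N) ℝ) (C : Fin N → ℝ)
    (hA : ∃ c : ℝ, 0 ≤ c ∧ c < 1 ∧ ∀ x : Fin N → ℝ,
      Real.sqrt (∑ i, (A *ᵥ x) i ^ 2) ≤ c * Real.sqrt (∑ i, x i ^ 2))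
    (D : Set ℝ) (hD : IsCompact D)
    {Ω : Type*} [MeasurableSpace Ω] (μ : Measure Ω) [IsProbabilityMeasure μ]
    (Z : ℤ → Ω → ℝ) (hZD : ∀ t ω, Z t ω ∈ D)
    (hZ2 : ∀ t, MemLp (Z t) 2 μ)
    -- Z is a strictly stationary white noise with variance γ0 > 0
    (hZmean : ∀ t, expv μ (Z t) = 0)
    (hwn : ∀ s t : ℤ, s ≠ t → covv μ (Z s) (Z t) = 0)
    (γ0 : ℝ) (hvar : ∀ t, covv μ (Z t) (Z t) = γ0) (hγ0 : 0 < γ0)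
    -- X = U^{A,C}(Z) is the state process: X_t = ∑_{j≥0} A^j C Z_{t-j}
    (X : ℤ → Ω → (Fin N → ℝ))
    (hX : ∀ t ω, HasSum (fun j : ℕ => Z (t - (j : ℤ)) ω • ((A ^ j) *ᵥ C)) (X t ω)) :
    (Summable (fun k : ℕ => memCapZ μ Z X k) ∧
      ∑' k : ℕ, memCapZ μ Z X k = ((ctrlMat A C).rank : ℝ)) ∧
    (ctrlMat A C).rank = Module.finrank ℝ (ctrlSpan A C) ∧
    ∑' k : ℕ, foreCapZ μ Z X (k + 1) = 0 := by
  obtain ⟨c, hc0, hc1, hAc⟩ := hA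
  have hA' : ∀ x, ‖toLp 2 (A *ᵥ x)‖ ≤ c * ‖toLp 2 x‖ := by
    simpa [EuclideanSpace.norm_eq] using hAc
  have hw1 : Summable fun j => ‖krylovSeq A C j‖ := by
    simpa using summable_norm_krylovSeq_pow A C hc0 hc1 hA' one_ne_zero
  have hw2 := summable_norm_krylovSeq_pow A C hc0 hc1 hA' two_ne_zero
  obtain ⟨M, hM⟩ := hD.isBounded.exists_norm_le
  have hZ : IsBoundedWhiteNoise_s19 μ Z γ0 :=
    .of_covv (fun t => (hZ2 t).aestronglyMeasurable) ⟨M, fun t ω => hM _ (hZD t ω)⟩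
      hZmean hwn hvar
  choose u hu using fun k => span_le_range_gramOp hw2 (Submodule.subset_span ⟨k, rfl⟩)
  have hMC := hasSum_inner_of_gramOp_eq hw2 hu
  rw [finrank_span_krylovSeq, ← rank_ctrlMat] at hMC
  simp_rw [← memCapZ_eq hZ hw1 hX hw2 hγ0 (hu _)] at hMC
  exact ⟨⟨hMC.summable, hMC.tsum_eq⟩, rank_ctrlMat A C,
    by simp [foreCapZ_succ_eq_zero hZ hw1 hX hw2 hγ0]⟩

theorem stmt_19 {N : ℕ}
    (A : Matrix (Fin N) (Fin N) ℝ) (C : Fin N → ℝ)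
    (hA : ∃ c : ℝ, 0 ≤ c ∧ c < 1 ∧ ∀ x : Fin N → ℝ,
      Real.sqrt (∑ i, (A *ᵥ x) i ^ 2) ≤ c * Real.sqrt (∑ i, x i ^ 2))
    (D : Set ℝ) (hD : IsCompact D)
    {Ω : Type*} [MeasurableSpace Ω] (μ : Measure Ω) [IsProbabilityMeasure μ]
    (Z : ℤ → Ω → ℝ) (hZD : ∀ t ω, Z t ω ∈ D)
    (hZ2 : ∀ t, MemLp (Z t) 2 μ)
    -- Z is a strictly stationary white noise with variance γ0 > 0
    (hstat : ∀ τ : ℤ, Measure.map (fun ω => fun t : ℤ => Z (t + τ) ω) μ =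
      Measure.map (fun ω => fun t : ℤ => Z t ω) μ)
    (hZmean : ∀ t, expv μ (Z t) = 0)
    (hwn : ∀ s t : ℤ, s ≠ t → covv μ (Z s) (Z t) = 0)
    (γ0 : ℝ) (hvar : ∀ t, covv μ (Z t) (Z t) = γ0) (hγ0 : 0 < γ0)
    -- X = U^{A,C}(Z) is the state process: X_t = ∑_{j≥0} A^j C Z_{t-j}
    (X : ℤ → Ω → (Fin N → ℝ))
    (hX : ∀ t ω, HasSum (fun j : ℕ => Z (t - (j : ℤ)) ω • ((A ^ j) *ᵥ C)) (X t ω))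
    -- ℝ^N = X ⊕ V and Ā = π_X A i_X is diagonalizable with non-zero eigenvalues
    (V : Submodule ℝ (Fin N → ℝ)) (hcompl : IsCompl (ctrlSpan A C) V)
    (lam : Fin (Module.finrank ℝ (ctrlSpan A C)) → ℝ)
    (b : Module.Basis (Fin (Module.finrank ℝ (ctrlSpan A C))) ℝ (ctrlSpan A C))
    (heig : ∀ i, (redA A C V hcompl) (b i) = lam i • b i)
    (hnz : ∀ i, lam i ≠ 0) :
    (Summable (fun k : ℕ => memCapZ μ Z X k) ∧
      ∑' k : ℕ, memCapZ μ Z X k = ((ctrlMat A C).rank : ℝ)) ∧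
    (ctrlMat A C).rank = Module.finrank ℝ (ctrlSpan A C) ∧
    ∑' k : ℕ, foreCapZ μ Z X (k + 1) = 0 :=
  stmt_19_general A C hA D hD μ Z hZD hZ2 hZmean hwn γ0 hvar hγ0 X hX
end
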